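/- arXiv:1205.2446 — 2 statements merged into one kernel-verified Lean document; each statement's English description precedes it below -/
import Mathlib

section
/- Let Y, X₁, X₂ be real random variables (or finite data vectors) with least-squares multiple regression y = b₀ + b₁x₁ + b₂x₂ of Y on (X₁, X₂). Let c₁₂ be the slope of the simple least-squares regression of X₁ on X₂, and define X₁* = X₁ − c₁₂X₂. Then the slope a₁* of the simple least-squares regression of Y on X₁* satisfies a₁* = b₁. -/
/-!
Let `r` be the residual of the multiple regression and `X₁* = X₁ - c₁₂ X₂`, so that
`Y = b₀ + b₁ X₁* + (b₁ c₁₂ + b₂) X₂ + r`. The normal equations make `r` uncorrelated with `X₁`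
and `X₂`, hence with `X₁*`, and `X₁*` is uncorrelated with `X₂` by the choice of `c₁₂`.
Bilinearity of the covariance then gives `cov(X₁*, Y) = b₁ var(X₁*)`.
-/

open Finset Filter

/-- Sample mean of a data vector. -/
noncomputable def mean (p : ℕ) (x : Fin p → ℝ) : ℝ := (∑ i, x i) / (p : ℝ)

/-- Sample covariance of two data vectors. -/
noncomputable def cov (p : ℕ) (x y : Fin p → ℝ) : ℝ :=
  (∑ i, (x i - mean p x) * (y i - mean p y)) / (p : ℝ)

/-- Sample variance of a data vector. -/
noncomputable def svar (p : ℕ) (x : Fin p → ℝ) : ℝ := cov p x x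

/-- Slope of the simple least-squares regression of `y` on `x`. -/
noncomputable def regSlope (p : ℕ) (x y : Fin p → ℝ) : ℝ := cov p x y / svar p x

lemma Finset.sum_mul_eq_zero_of_forall_sum_sq_le {ι : Type*} (s : Finset ι) (r x : ι → ℝ)
    (h : ∀ t : ℝ, ∑ i ∈ s, r i ^ 2 ≤ ∑ i ∈ s, (r i - t * x i) ^ 2) :
    ∑ i ∈ s, r i * x i = 0 := by
  have hquad : ∀ t : ℝ,
      0 ≤ (∑ i ∈ s, x i ^ 2) * (t * t) + (-2 * ∑ i ∈ s, r i * x i) * t + 0 := by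
    intro t
    have hexpand : ∑ i ∈ s, (r i - t * x i) ^ 2 = ∑ i ∈ s, r i ^ 2
        + ((∑ i ∈ s, x i ^ 2) * (t * t) + (-2 * ∑ i ∈ s, r i * x i) * t + 0) := by
      simp only [mul_sum, sum_mul, add_zero, ← sum_add_distrib]
      exact sum_congr rfl fun i _ => by ring
    linarith [h t]
  have := discrim_le_zero hquad
  rw [discrim] at this
  nlinarith

section Covariance

variable {p : ℕ}

lemma sum_sub_mean (x : Fin p → ℝ) : ∑ i, (x i - mean p x) = 0 := by
  rcases eq_or_ne p 0 with rfl | hp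
  · simp
  · rw [sum_sub_distrib, sum_const, card_fin, nsmul_eq_mul, mean]
    field_simp
    ring

lemma cov_eq_sum_sub_mean_mul (x y : Fin p → ℝ) :
    cov p x y = (∑ i, (x i - mean p x) * y i) / p := by
  simp only [cov, mul_sub, sum_sub_distrib, ← sum_mul]
  rw [← sum_sub_distrib, sum_sub_mean, zero_mul, sub_zero]

lemma cov_comm (x y : Fin p → ℝ) : cov p x y = cov p y x := by
  simp only [cov, mul_comm]

lemma cov_add_right (x y z : Fin p → ℝ) :
    cov p x (fun i => y i + z i) = cov p x y + cov p x z := by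
  simp only [cov_eq_sum_sub_mean_mul, mul_add, sum_add_distrib, add_div]

lemma cov_sub_right (x y z : Fin p → ℝ) :
    cov p x (fun i => y i - z i) = cov p x y - cov p x z := by
  simp only [cov_eq_sum_sub_mean_mul, mul_sub, sum_sub_distrib, sub_div]

lemma cov_const_mul_right (x y : Fin p → ℝ) (a : ℝ) :
    cov p x (fun i => a * y i) = a * cov p x y := by
  simp only [cov_eq_sum_sub_mean_mul, mul_left_comm _ a, ← mul_sum, mul_div_assoc]

lemma cov_const_add_right (x y : Fin p → ℝ) (a : ℝ) :
    cov p x (fun i => a + y i) = cov p x y := by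
  simp only [cov_eq_sum_sub_mean_mul, mul_add, sum_add_distrib, ← sum_mul,
    sum_sub_mean, zero_mul, zero_add]

lemma cov_sq_le_svar_mul_svar (x y : Fin p → ℝ) : cov p x y ^ 2 ≤ svar p x * svar p y := by
  simp only [svar, cov, div_pow, div_mul_div_comm, ← sq]
  gcongr
  simpa only [← sq] using Finset.sum_mul_sq_le_sq_mul_sq _ _ _

lemma cov_eq_zero_of_svar_eq_zero {x : Fin p → ℝ} (hx : svar p x = 0) (y : Fin p → ℝ) :
    cov p x y = 0 := by
  have := cov_sq_le_svar_mul_svar x y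
  rw [hx, zero_mul] at this
  exact pow_eq_zero_iff (n := 2) two_ne_zero |>.mp (le_antisymm this (sq_nonneg _))

lemma cov_eq_zero_of_sum_eq_zero {x r : Fin p → ℝ} (hr : ∑ i, r i = 0)
    (hxr : ∑ i, r i * x i = 0) : cov p x r = 0 := by
  rw [cov_comm, cov_eq_sum_sub_mean_mul, mean, hr, zero_div]
  simp only [sub_zero, hxr, zero_div]

lemma cov_sub_regSlope_mul_eq_zero (x y : Fin p → ℝ) :
    cov p x (fun i => y i - regSlope p x y * x i) = 0 := by
  rw [cov_sub_right, cov_const_mul_right, regSlope]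
  by_cases hx : svar p x = 0
  · rw [cov_eq_zero_of_svar_eq_zero hx]
    ring
  · rw [svar] at hx ⊢
    field_simp
    ring

end Covariance

section LeastSquares

variable {p : ℕ} {Y X1 X2 : Fin p → ℝ} {b0 b1 b2 : ℝ}

def lsResidual (Y X1 X2 : Fin p → ℝ) (b0 b1 b2 : ℝ) : Fin p → ℝ :=
  fun i => Y i - b0 - b1 * X1 i - b2 * X2 i

def IsLeastSquares (Y X1 X2 : Fin p → ℝ) (b0 b1 b2 : ℝ) : Prop :=
  ∀ t0 t1 t2 : ℝ,
    ∑ i, lsResidual Y X1 X2 b0 b1 b2 i ^ 2 ≤ ∑ i, lsResidual Y X1 X2 t0 t1 t2 i ^ 2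

namespace IsLeastSquares

lemma sum_lsResidual_eq_zero (h : IsLeastSquares Y X1 X2 b0 b1 b2) :
    ∑ i, lsResidual Y X1 X2 b0 b1 b2 i = 0 := by
  simpa using sum_mul_eq_zero_of_forall_sum_sq_le _ _ (fun _ => 1) fun t =>
    (h (b0 + t) b1 b2).trans_eq (sum_congr rfl fun i _ => by simp only [lsResidual]; ring)

lemma cov_first_lsResidual_eq_zero (h : IsLeastSquares Y X1 X2 b0 b1 b2) :
    cov p X1 (lsResidual Y X1 X2 b0 b1 b2) = 0 :=
  cov_eq_zero_of_sum_eq_zero h.sum_lsResidual_eq_zero <|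
    sum_mul_eq_zero_of_forall_sum_sq_le _ _ _ fun t =>
      (h b0 (b1 + t) b2).trans_eq (sum_congr rfl fun i _ => by simp only [lsResidual]; ring)

lemma cov_second_lsResidual_eq_zero (h : IsLeastSquares Y X1 X2 b0 b1 b2) :
    cov p X2 (lsResidual Y X1 X2 b0 b1 b2) = 0 :=
  cov_eq_zero_of_sum_eq_zero h.sum_lsResidual_eq_zero <|
    sum_mul_eq_zero_of_forall_sum_sq_le _ _ _ fun t =>
      (h b0 b1 (b2 + t)).trans_eq (sum_congr rfl fun i _ => by simp only [lsResidual]; ring)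

end IsLeastSquares

end LeastSquares

theorem multiple_eq_simple_on_adjusted_first_general
    (p : ℕ) (Y X1 X2 : Fin p → ℝ) (b0 b1 b2 : ℝ)
    (hBmin : ∀ t0 t1 t2 : ℝ,
      ∑ i, (Y i - b0 - b1 * X1 i - b2 * X2 i)^2 ≤ ∑ i, (Y i - t0 - t1 * X1 i - t2 * X2 i)^2)
    (hvstar : svar p (fun i => X1 i - regSlope p X2 X1 * X2 i) ≠ 0) :
    regSlope p (fun i => X1 i - regSlope p X2 X1 * X2 i) Y = b1 := by
  have hls : IsLeastSquares Y X1 X2 b0 b1 b2 := hBmin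
  set c := regSlope p X2 X1
  set X1s : Fin p → ℝ := fun i => X1 i - c * X2 i
  set r := lsResidual Y X1 X2 b0 b1 b2
  have hX1s_X2 : cov p X1s X2 = 0 := by
    rw [cov_comm]
    exact cov_sub_regSlope_mul_eq_zero X2 X1
  have hX1s_r : cov p X1s r = 0 := by
    rw [cov_comm, cov_sub_right, cov_const_mul_right, cov_comm, hls.cov_first_lsResidual_eq_zero,
      cov_comm, hls.cov_second_lsResidual_eq_zero, mul_zero, sub_zero]
  have hY : Y = fun i => b1 * X1s i + ((b1 * c + b2) * X2 i + (b0 + r i)) := by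
    funext i
    simp only [X1s, r, lsResidual]
    ring
  rw [regSlope, hY, cov_add_right, cov_add_right, cov_const_add_right, cov_const_mul_right,
    cov_const_mul_right, hX1s_X2, hX1s_r, mul_zero, add_zero, add_zero]
  exact mul_div_cancel_right₀ b1 hvstar

theorem multiple_eq_simple_on_adjusted_first
    (p : ℕ) (Y X1 X2 : Fin p → ℝ) (b0 b1 b2 : ℝ)
    (hBmin : ∀ t0 t1 t2 : ℝ,
      ∑ i, (Y i - b0 - b1 * X1 i - b2 * X2 i)^2 ≤ ∑ i, (Y i - t0 - t1 * X1 i - t2 * X2 i)^2)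
    (hBuniq : ∀ t0 t1 t2 : ℝ,
      ∑ i, (Y i - t0 - t1 * X1 i - t2 * X2 i)^2 ≤ ∑ i, (Y i - b0 - b1 * X1 i - b2 * X2 i)^2 →
      t0 = b0 ∧ t1 = b1 ∧ t2 = b2)
    (hv2 : svar p X2 ≠ 0)
    (hvstar : svar p (fun i => X1 i - regSlope p X2 X1 * X2 i) ≠ 0) :
    regSlope p (fun i => X1 i - regSlope p X2 X1 * X2 i) Y = b1 :=
  multiple_eq_simple_on_adjusted_first_general p Y X1 X2 b0 b1 b2 hBmin hvstar
end

section
/- Three-predictor version of the main theorem: let b₁ be the coefficient of x₁ in the least-squares regression y = b₀ + b₁x₁ + b₂x₂ + b₃x₃ of Y on (X₁, X₂, X₃), let c₁₂, c₁₃ be the coefficients in the least-squares regression x₁ = c₀ + c₁₂x₂ + c₁₃x₃ of X₁ on (X₂, X₃), and define X₁* = X₁ − c₁₂X₂ − c₁₃X₃. Then the slope a₁* of the simple regression of Y on X₁* equals b₁. -/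
/-
Frisch–Waugh–Lovell. By the first-order conditions of the two least-squares problems, the
residual `e` of the full fit is orthogonal to `1, X₁, X₂, X₃` and the residual `u` of `X₁` on
`(1, X₂, X₃)` is orthogonal to `1, X₂, X₃`. As `X₁* = u + c₀` with `u` centred,
`cov(X₁*, Y) = ⟨u, Y⟩ / p` and `var(X₁*) = ⟨u, u⟩ / p`. Writing `Y = b₀ + b₁X₁ + b₂X₂ + b₃X₃ + e` and
`X₁ = c₀ + c₁₂X₂ + c₁₃X₃ + u`, every term of `⟨u, Y⟩` other than `b₁⟨u, u⟩` vanishes.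
-/

open Finset Filter

section LeastSquares

variable {ι : Type*} [Fintype ι]

theorem sum_mul_eq_zero_of_forall_sum_sq_le {e v : ι → ℝ}
    (h : ∀ t : ℝ, ∑ i, e i ^ 2 ≤ ∑ i, (e i - t * v i) ^ 2) : ∑ i, e i * v i = 0 := by
  have hmin : IsLocalMin (fun t : ℝ => ∑ i, (e i - t * v i) ^ 2) 0 :=
    Eventually.of_forall fun t => by simpa using h t
  have hderiv : HasDerivAt (fun t : ℝ => ∑ i, (e i - t * v i) ^ 2)
      (∑ i, 2 * (e i - 0 * v i) ^ 1 * (0 - 1 * v i)) 0 :=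
    HasDerivAt.fun_sum fun i _ =>
      ((hasDerivAt_const _ (e i)).sub ((hasDerivAt_id (0 : ℝ)).mul_const (v i))).pow 2
  simpa [mul_assoc, ← mul_sum] using hmin.hasDerivAt_eq_zero hderiv

theorem sum_mul_eq_mul_sum_sq_of_orthogonal {Y X1 X2 X3 e u : ι → ℝ}
    {b0 b1 b2 b3 c0 c12 c13 : ℝ}
    (he : ∀ d0 d1 d2 d3 : ℝ, ∑ i, e i * (d0 + d1 * X1 i + d2 * X2 i + d3 * X3 i) = 0)
    (hu : ∀ d0 d2 d3 : ℝ, ∑ i, u i * (d0 + d2 * X2 i + d3 * X3 i) = 0)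
    (hY : ∀ i, Y i = b0 + b1 * X1 i + b2 * X2 i + b3 * X3 i + e i)
    (hX1 : ∀ i, X1 i = c0 + c12 * X2 i + c13 * X3 i + u i) :
    ∑ i, u i * Y i = b1 * ∑ i, u i ^ 2 := calc
  _ = ∑ i, (u i * ((b0 + b1 * c0) + (b1 * c12 + b2) * X2 i + (b1 * c13 + b3) * X3 i)
        -- `e i * u i`, with `u i` written through `hX1` so that `he` applies
        + e i * (-c0 + 1 * X1 i + -c12 * X2 i + -c13 * X3 i) + b1 * u i ^ 2) :=
      sum_congr rfl fun i _ => by linear_combination u i * hY i + (b1 * u i - e i) * hX1 i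
  _ = b1 * ∑ i, u i ^ 2 := by simp only [sum_add_distrib, hu, he, ← mul_sum, zero_add]

end LeastSquares

theorem cov_eq_sum_mul_div_of_eq_add_const {p : ℕ} {x u : Fin p → ℝ} {c : ℝ}
    (hx : ∀ i, x i = u i + c) (hu : ∑ i, u i = 0) (y : Fin p → ℝ) :
    cov p x y = (∑ i, u i * y i) / p := by
  rcases eq_or_ne p 0 with rfl | hp
  · simp [cov]
  have hmean : mean p x = c := by
    simp only [mean, hx, sum_add_distrib, hu, sum_const, card_univ, Fintype.card_fin,
      nsmul_eq_mul]
    field_simp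
    ring
  simp only [cov, hmean, hx, add_sub_cancel_right, mul_sub, sum_sub_distrib, ← sum_mul, hu,
    zero_mul, sub_zero]

theorem svar_eq_sum_sq_div_of_eq_add_const {p : ℕ} {x u : Fin p → ℝ} {c : ℝ}
    (hx : ∀ i, x i = u i + c) (hu : ∑ i, u i = 0) :
    svar p x = (∑ i, u i ^ 2) / p := by
  rw [svar, cov_eq_sum_mul_div_of_eq_add_const hx hu]
  simp only [hx, mul_add, sum_add_distrib, ← sum_mul, hu, zero_mul, add_zero, sq]

theorem three_predictor_main_general
    (p : ℕ) (Y X1 X2 X3 : Fin p → ℝ) (b0 b1 b2 b3 c0 c12 c13 : ℝ)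
    (hBmin : ∀ t0 t1 t2 t3 : ℝ,
      ∑ i, (Y i - b0 - b1 * X1 i - b2 * X2 i - b3 * X3 i)^2 ≤ ∑ i, (Y i - t0 - t1 * X1 i - t2 * X2 i - t3 * X3 i)^2)
    (hCmin : ∀ t0 t1 t2 : ℝ,
      ∑ i, (X1 i - c0 - c12 * X2 i - c13 * X3 i)^2 ≤ ∑ i, (X1 i - t0 - t1 * X2 i - t2 * X3 i)^2)
    (hvstar : svar p (fun i => X1 i - c12 * X2 i - c13 * X3 i) ≠ 0) :
    regSlope p (fun i => X1 i - c12 * X2 i - c13 * X3 i) Y = b1 := by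
  set e : Fin p → ℝ := fun i => Y i - b0 - b1 * X1 i - b2 * X2 i - b3 * X3 i
  set u : Fin p → ℝ := fun i => X1 i - c0 - c12 * X2 i - c13 * X3 i
  have he (d0 d1 d2 d3 : ℝ) : ∑ i, e i * (d0 + d1 * X1 i + d2 * X2 i + d3 * X3 i) = 0 :=
    sum_mul_eq_zero_of_forall_sum_sq_le fun t =>
      (hBmin (b0 + t * d0) (b1 + t * d1) (b2 + t * d2) (b3 + t * d3)).trans_eq
        (sum_congr rfl fun i _ => by ring)
  have hu (d0 d2 d3 : ℝ) : ∑ i, u i * (d0 + d2 * X2 i + d3 * X3 i) = 0 :=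
    sum_mul_eq_zero_of_forall_sum_sq_le fun t =>
      (hCmin (c0 + t * d0) (c12 + t * d2) (c13 + t * d3)).trans_eq
        (sum_congr rfl fun i _ => by ring)
  have hu0 : ∑ i, u i = 0 := by simpa using hu 1 0 0
  have hr (i : Fin p) : X1 i - c12 * X2 i - c13 * X3 i = u i + c0 := by ring
  have hY (i : Fin p) : Y i = b0 + b1 * X1 i + b2 * X2 i + b3 * X3 i + e i := by ring
  have hX1 (i : Fin p) : X1 i = c0 + c12 * X2 i + c13 * X3 i + u i := by ring
  have key := sum_mul_eq_mul_sum_sq_of_orthogonal he hu hY hX1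
  rw [svar_eq_sum_sq_div_of_eq_add_const hr hu0] at hvstar
  rw [regSlope, cov_eq_sum_mul_div_of_eq_add_const hr hu0,
    svar_eq_sum_sq_div_of_eq_add_const hr hu0, key, mul_div_assoc, mul_div_cancel_right₀ b1 hvstar]

theorem three_predictor_main
    (p : ℕ) (Y X1 X2 X3 : Fin p → ℝ) (b0 b1 b2 b3 c0 c12 c13 : ℝ)
    (hBmin : ∀ t0 t1 t2 t3 : ℝ,
      ∑ i, (Y i - b0 - b1 * X1 i - b2 * X2 i - b3 * X3 i)^2 ≤ ∑ i, (Y i - t0 - t1 * X1 i - t2 * X2 i - t3 * X3 i)^2)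
    (hBuniq : ∀ t0 t1 t2 t3 : ℝ,
      ∑ i, (Y i - t0 - t1 * X1 i - t2 * X2 i - t3 * X3 i)^2 ≤ ∑ i, (Y i - b0 - b1 * X1 i - b2 * X2 i - b3 * X3 i)^2 →
      t0 = b0 ∧ t1 = b1 ∧ t2 = b2 ∧ t3 = b3)
    (hCmin : ∀ t0 t1 t2 : ℝ,
      ∑ i, (X1 i - c0 - c12 * X2 i - c13 * X3 i)^2 ≤ ∑ i, (X1 i - t0 - t1 * X2 i - t2 * X3 i)^2)
    (hCuniq : ∀ t0 t1 t2 : ℝ,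
      ∑ i, (X1 i - t0 - t1 * X2 i - t2 * X3 i)^2 ≤ ∑ i, (X1 i - c0 - c12 * X2 i - c13 * X3 i)^2 →
      t0 = c0 ∧ t1 = c12 ∧ t2 = c13)
    (hvstar : svar p (fun i => X1 i - c12 * X2 i - c13 * X3 i) ≠ 0) :
    regSlope p (fun i => X1 i - c12 * X2 i - c13 * X3 i) Y = b1 :=
  three_predictor_main_general p Y X1 X2 X3 b0 b1 b2 b3 c0 c12 c13 hBmin hCmin hvstar
end
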